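/- arXiv:1601.03199 — 2 statements merged into one kernel-verified Lean document; each statement's English description precedes it below -/
import Mathlib

section
/- For all x > 0 one has 2 < λ(x) < 4, where λ(x) = log(1 − (2/x)·Ψ(x)) / log Ψ(x) and Ψ(x) = I₁(x)/I₀(x). (Here 0 < Ψ(x) < 1 and 0 < 1 − (2/x)·Ψ(x) < 1 for x > 0, so λ(x) is well defined and positive.) -/
open Real Filter Topology

/-- The modified Bessel function of the first kind of real order `ν`. -/
noncomputable def besselI (ν x : ℝ) : ℝ :=
  ∑' m : ℕ, (x / 2) ^ (2 * (m : ℝ) + ν) / ((m.factorial : ℝ) * Real.Gamma ((m : ℝ) + ν + 1))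

/-- `Ψ_ν(x) = I_{ν+1}(x) / I_ν(x)`. -/
noncomputable def psi (ν x : ℝ) : ℝ := besselI (ν + 1) x / besselI ν x

/-!
With `y = (x/2)²` one has `I_n(x) = (x/2)ⁿ f_n(y)`, where `f_n(y) = ∑ yᵐ / (m! (m+n)!)`, and
the recurrence `I₀ - I₂ = (2/x) I₁` turns `1 - (2/x) Ψ` into `I₂ / I₀`. The claim thus reads
`Ψ⁴ < I₂ / I₀ < Ψ²`, i.e. `I₀ I₂ < I₁²` and `I₁⁴ < I₂ I₀³`, two comparisons of power series
in `y` with positive coefficients. By Vandermonde's identity the `k`-th coefficient of `f_a f_b`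
is `C(2k+a+b, k) / ((k+a)! (k+b)!)`. Hence the coefficients of `f₀ f₂` lie below those of `f₁²`,
and the coefficients `P, Q, R` of `f₁², f₀ f₂, f₀²` satisfy `Q_k R_{k+1} = P_k²`, so that by
AM-GM the coefficient of `yⁿ⁺¹` in `(f₀ f₂) f₀²` dominates that of `yⁿ` in `(f₁²)²`.
-/

open Finset
open scoped Nat

lemma HasSum.mul_pow_antidiagonal {y A B : ℝ} {a b : ℕ → ℝ}
    (hA : HasSum (fun n => a n * y ^ n) A) (hB : HasSum (fun n => b n * y ^ n) B) :
    HasSum (fun n => (∑ p ∈ antidiagonal n, a p.1 * b p.2) * y ^ n) (A * B) := by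
  have hA' : Summable fun n => ‖a n * y ^ n‖ := hA.summable.norm
  have hB' : Summable fun n => ‖b n * y ^ n‖ := hB.summable.norm
  have hterm : ∀ n, ∑ p ∈ antidiagonal n, a p.1 * y ^ p.1 * (b p.2 * y ^ p.2) =
      (∑ p ∈ antidiagonal n, a p.1 * b p.2) * y ^ n := fun n => by
    rw [sum_mul]
    refine sum_congr rfl fun p hp => ?_
    rw [← mem_antidiagonal.1 hp, pow_add]
    ring
  simp_rw [← hterm]
  rw [← hA.tsum_eq, ← hB.tsum_eq, tsum_mul_tsum_eq_tsum_sum_antidiagonal_of_summable_norm hA' hB']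
  exact (summable_norm_sum_mul_antidiagonal_of_summable_norm hA' hB').of_norm.hasSum

lemma sum_antidiagonal_mul_le_of_mul_succ_eq_sq {P Q R : ℕ → ℝ} (hQ : ∀ k, 0 ≤ Q k)
    (hR : ∀ k, 0 ≤ R k) (h : ∀ k, Q k * R (k + 1) = P k ^ 2) (n : ℕ) :
    ∑ p ∈ antidiagonal n, P p.1 * P p.2 ≤ ∑ p ∈ antidiagonal (n + 1), Q p.1 * R p.2 := by
  have amgm : ∀ p ∈ antidiagonal n,
      2 * (P p.1 * P p.2) ≤ Q p.1 * R (p.2 + 1) + Q p.2 * R (p.1 + 1) := by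
    intro p _
    have hprod : Q p.1 * R (p.2 + 1) * (Q p.2 * R (p.1 + 1)) = (P p.1 * P p.2) ^ 2 := by
      rw [mul_pow, ← h, ← h]; ring
    nlinarith [sq_nonneg (Q p.1 * R (p.2 + 1) - Q p.2 * R (p.1 + 1)),
      mul_nonneg (hQ p.1) (hR (p.2 + 1)), mul_nonneg (hQ p.2) (hR (p.1 + 1))]
  have hsym : ∑ p ∈ antidiagonal n, (Q p.1 * R (p.2 + 1) + Q p.2 * R (p.1 + 1)) =
      2 * ∑ p ∈ antidiagonal n, Q p.1 * R (p.2 + 1) := by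
    rw [sum_add_distrib, two_mul]
    congr 1
    exact Finset.Nat.sum_antidiagonal_swap (f := fun p => Q p.1 * R (p.2 + 1))
  calc ∑ p ∈ antidiagonal n, P p.1 * P p.2 ≤ ∑ p ∈ antidiagonal n, Q p.1 * R (p.2 + 1) := by
        linarith [mul_sum (antidiagonal n) (fun p => P p.1 * P p.2) 2, sum_le_sum amgm]
    _ ≤ Q (n + 1) * R 0 + ∑ p ∈ antidiagonal n, Q p.1 * R (p.2 + 1) :=
        le_add_of_nonneg_left (mul_nonneg (hQ (n + 1)) (hR 0))
    _ = _ := (Finset.Nat.sum_antidiagonal_succ' (f := fun p => Q p.1 * R p.2)).symm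

lemma log_div_log_mem_Ioo {p q a b : ℝ} (hp : 0 < p) (hab : a < b) (hb : p ^ b < q)
    (ha : q < p ^ a) : log q / log p ∈ Set.Ioo a b := by
  have hq : 0 < q := (rpow_pos_of_pos hp b).trans hb
  have hlb : b * log p < log q := by
    rw [← Real.log_rpow hp]
    exact log_lt_log (rpow_pos_of_pos hp b) hb
  have hla : log q < a * log p := by
    rw [← Real.log_rpow hp]
    exact log_lt_log hq ha
  have hlog : log p < 0 := by nlinarith
  constructor
  · rw [lt_div_iff_of_neg hlog]
    linarith
  · rw [div_lt_iff_of_neg hlog]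
    linarith

noncomputable def besselICoeff (n m : ℕ) : ℝ := 1 / ((m ! : ℝ) * (m + n)!)

noncomputable def besselISeries (n : ℕ) (y : ℝ) : ℝ := ∑' m, besselICoeff n m * y ^ m

noncomputable def besselIProdCoeff (a b k : ℕ) : ℝ :=
  ∑ p ∈ antidiagonal k, besselICoeff a p.1 * besselICoeff b p.2

lemma besselICoeff_pos (n m : ℕ) : 0 < besselICoeff n m := by
  unfold besselICoeff; positivity

lemma besselIProdCoeff_pos (a b k : ℕ) : 0 < besselIProdCoeff a b k :=
  sum_pos (fun _ _ => mul_pos (besselICoeff_pos _ _) (besselICoeff_pos _ _))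
    ⟨(0, k), by simp⟩

lemma summable_besselICoeff_mul_pow (n : ℕ) (y : ℝ) :
    Summable fun m => besselICoeff n m * y ^ m := by
  refine (Real.summable_pow_div_factorial |y|).of_norm_bounded fun m => ?_
  rw [norm_mul, norm_pow, Real.norm_eq_abs, Real.norm_eq_abs, abs_of_pos (besselICoeff_pos n m),
    div_eq_inv_mul]
  gcongr
  rw [besselICoeff, one_div]
  gcongr
  exact le_mul_of_one_le_right (by positivity) (by exact_mod_cast (m + n).factorial_pos)

lemma hasSum_besselISeries (n : ℕ) (y : ℝ) :
    HasSum (fun m => besselICoeff n m * y ^ m) (besselISeries n y) :=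
  (summable_besselICoeff_mul_pow n y).hasSum

lemma besselISeries_pos (n : ℕ) {y : ℝ} (hy : 0 ≤ y) : 0 < besselISeries n y :=
  (summable_besselICoeff_mul_pow n y).tsum_pos
    (fun m => mul_nonneg (besselICoeff_pos n m).le (pow_nonneg hy m)) 0
    (by simpa using besselICoeff_pos n 0)

lemma besselI_natCast (n : ℕ) (x : ℝ) :
    besselI n x = (x / 2) ^ n * besselISeries n ((x / 2) ^ 2) := by
  rw [besselISeries, ← tsum_mul_left]
  refine tsum_congr fun m => ?_
  rw [show 2 * (m : ℝ) + n = ((2 * m + n : ℕ) : ℝ) by push_cast; ring, Real.rpow_natCast,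
    show (m : ℝ) + n + 1 = ((m + n : ℕ) : ℝ) + 1 by push_cast; ring, Real.Gamma_nat_eq_factorial,
    besselICoeff, pow_add, pow_mul]
  ring

lemma besselICoeff_succ (n m : ℕ) :
    besselICoeff n (m + 1) = (n + 1) * besselICoeff (n + 1) (m + 1) + besselICoeff (n + 2) m := by
  unfold besselICoeff
  rw [show m + 1 + (n + 1) = m + n + 1 + 1 by ring, show m + (n + 2) = m + n + 1 + 1 by ring,
    Nat.factorial_succ (m + n + 1), Nat.factorial_succ m, show m + 1 + n = m + n + 1 by ring]
  push_cast
  field_simp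
  ring

lemma besselICoeff_zero (n : ℕ) : besselICoeff n 0 = (n + 1) * besselICoeff (n + 1) 0 := by
  unfold besselICoeff
  rw [zero_add, zero_add, Nat.factorial_succ]
  push_cast
  field_simp

lemma besselISeries_eq_add (n : ℕ) (y : ℝ) :
    besselISeries n y = (n + 1) * besselISeries (n + 1) y + y * besselISeries (n + 2) y := by
  have hdiff := (hasSum_besselISeries n y).sub
    ((hasSum_besselISeries (n + 1) y).mul_left ((n : ℝ) + 1))
  have hshift := (hasSum_besselISeries (n + 2) y).mul_left y
  rw [show (fun m => y * (besselICoeff (n + 2) m * y ^ m)) = fun m => besselICoeff n (m + 1) *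
      y ^ (m + 1) - (n + 1) * (besselICoeff (n + 1) (m + 1) * y ^ (m + 1)) from
    funext fun m => by rw [besselICoeff_succ]; ring] at hshift
  have := ((hasSum_nat_add_iff' 1).2 hdiff).unique hshift
  rw [sum_range_one, besselICoeff_zero] at this
  linarith

lemma hasSum_besselIProdCoeff (a b : ℕ) (y : ℝ) :
    HasSum (fun k => besselIProdCoeff a b k * y ^ k) (besselISeries a y * besselISeries b y) :=
  (hasSum_besselISeries a y).mul_pow_antidiagonal (hasSum_besselISeries b y)

lemma besselIProdCoeff_eq (a b k : ℕ) :
    besselIProdCoeff a b k = ((k + b + (k + a)).choose k : ℝ) / ((k + a)! * (k + b)!) := by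
  rw [besselIProdCoeff, Nat.add_choose_eq, Nat.cast_sum, sum_div]
  refine sum_congr rfl fun p hp => ?_
  obtain ⟨i, j⟩ := p
  obtain rfl : i + j = k := mem_antidiagonal.1 hp
  rw [show i + j + b = i + (j + b) by ring, show i + j + a = j + (i + a) by ring, Nat.cast_mul,
    Nat.cast_add_choose, Nat.cast_add_choose, besselICoeff, besselICoeff]
  field_simp

lemma besselIProdCoeff_lt (n k : ℕ) :
    besselIProdCoeff n (n + 2) k < besselIProdCoeff (n + 1) (n + 1) k := by
  rw [besselIProdCoeff_eq, besselIProdCoeff_eq,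
    show k + (n + 2) + (k + n) = k + (n + 1) + (k + (n + 1)) by ring]
  apply div_lt_div_of_pos_left (by exact_mod_cast Nat.choose_pos (by omega)) (by positivity)
  rw [show k + (n + 1) = k + n + 1 by ring, show k + (n + 2) = k + n + 1 + 1 by ring,
    Nat.factorial_succ (k + n + 1), Nat.factorial_succ (k + n)]
  push_cast
  have : 0 < ((k + n)! : ℝ) := by positivity
  nlinarith [mul_pos (mul_pos this this) (by positivity : (0 : ℝ) < k + n + 1)]

lemma besselIProdCoeff_zero_two_mul_zero_zero_succ (k : ℕ) :
    besselIProdCoeff 0 2 k * besselIProdCoeff 0 0 (k + 1) = besselIProdCoeff 1 1 k ^ 2 := by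
  simp only [besselIProdCoeff_eq, add_zero]
  rw [show k + 2 + k = k + (k + 2) by ring, show k + 1 + (k + 1) = k + (k + 2) by ring,
    Nat.cast_add_choose, show k + (k + 2) = k + 1 + (k + 1) by ring, Nat.cast_add_choose]
  field_simp

lemma besselISeries_mul_lt_sq (n : ℕ) {y : ℝ} (hy : 0 ≤ y) :
    besselISeries n y * besselISeries (n + 2) y < besselISeries (n + 1) y ^ 2 := by
  rw [sq]
  refine hasSum_lt (fun k => ?_) (i := 0) ?_ (hasSum_besselIProdCoeff n (n + 2) y)
    (hasSum_besselIProdCoeff (n + 1) (n + 1) y)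
  · exact mul_le_mul_of_nonneg_right (besselIProdCoeff_lt n k).le (pow_nonneg hy k)
  · simpa using besselIProdCoeff_lt n 0

lemma mul_besselISeries_one_pow_four_lt {y : ℝ} (hy : 0 ≤ y) :
    y * besselISeries 1 y ^ 4 < besselISeries 2 y * besselISeries 0 y ^ 3 := by
  have hcoeff := sum_antidiagonal_mul_le_of_mul_succ_eq_sq
    (fun k => (besselIProdCoeff_pos 0 2 k).le) (fun k => (besselIProdCoeff_pos 0 0 k).le)
    besselIProdCoeff_zero_two_mul_zero_zero_succ
  have hlhs := ((hasSum_besselIProdCoeff 1 1 y).mul_pow_antidiagonal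
    (hasSum_besselIProdCoeff 1 1 y)).mul_left y
  have hrhs := (hasSum_nat_add_iff' 1).2 <| (hasSum_besselIProdCoeff 0 2 y).mul_pow_antidiagonal
    (hasSum_besselIProdCoeff 0 0 y)
  have hle := hasSum_le (fun n => ?_) hlhs hrhs
  · rw [sum_range_one, pow_zero, mul_one, Finset.Nat.antidiagonal_zero, sum_singleton] at hle
    have := mul_pos (besselIProdCoeff_pos 0 2 0) (besselIProdCoeff_pos 0 0 0)
    linear_combination hle + this
  · have := mul_le_mul_of_nonneg_right (hcoeff n) (pow_nonneg hy (n + 1))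
    rw [pow_succ] at this ⊢
    linarith

section Bessel

variable {x : ℝ}

lemma besselI_natCast_pos (n : ℕ) (hx : 0 < x) : 0 < besselI n x := by
  rw [besselI_natCast]
  exact mul_pos (by positivity) (besselISeries_pos n (by positivity))

lemma besselI_sub_besselI_add_two (n : ℕ) (hx : x ≠ 0) :
    besselI n x - besselI (n + 2) x = 2 * (n + 1) / x * besselI (n + 1) x := by
  have h2 := besselI_natCast (n + 2) x
  have h1 := besselI_natCast (n + 1) x
  push_cast at h1 h2
  rw [besselI_natCast, h1, h2, besselISeries_eq_add n]
  field_simp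
  ring

lemma besselI_mul_besselI_add_two_lt_sq (n : ℕ) (hx : x ≠ 0) :
    besselI n x * besselI (n + 2) x < besselI (n + 1) x ^ 2 := by
  have h2 := besselI_natCast (n + 2) x
  have h1 := besselI_natCast (n + 1) x
  push_cast at h1 h2
  rw [besselI_natCast, h1, h2]
  have ht : 0 < (x / 2) ^ (2 * n + 2) := Even.pow_pos ⟨n + 1, by ring⟩ (by positivity)
  calc _ = (x / 2) ^ (2 * n + 2) * (besselISeries n ((x / 2) ^ 2) *
        besselISeries (n + 2) ((x / 2) ^ 2)) := by ring
    _ < (x / 2) ^ (2 * n + 2) * besselISeries (n + 1) ((x / 2) ^ 2) ^ 2 :=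
        mul_lt_mul_of_pos_left (besselISeries_mul_lt_sq n (by positivity)) ht
    _ = _ := by ring

lemma besselI_one_pow_four_lt (hx : x ≠ 0) :
    besselI 1 x ^ 4 < besselI 2 x * besselI 0 x ^ 3 := by
  have h0 := besselI_natCast 0 x
  have h1 := besselI_natCast 1 x
  have h2 := besselI_natCast 2 x
  push_cast at h0 h1 h2
  rw [h0, h1, h2]
  have ht : 0 < (x / 2) ^ 2 := by positivity
  calc _ = (x / 2) ^ 2 * ((x / 2) ^ 2 * besselISeries 1 ((x / 2) ^ 2) ^ 4) := by ring
    _ < (x / 2) ^ 2 * (besselISeries 2 ((x / 2) ^ 2) * besselISeries 0 ((x / 2) ^ 2) ^ 3) :=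
        mul_lt_mul_of_pos_left (mul_besselISeries_one_pow_four_lt ht.le) ht
    _ = _ := by ring

end Bessel

theorem stmt_6 (x : ℝ) (hx : 0 < x) :
    2 < Real.log (1 - (2 / x) * psi 0 x) / Real.log (psi 0 x) ∧
    Real.log (1 - (2 / x) * psi 0 x) / Real.log (psi 0 x) < 4 := by
  have hI0 : 0 < besselI 0 x := by exact_mod_cast besselI_natCast_pos 0 hx
  have hI1 : 0 < besselI 1 x := by exact_mod_cast besselI_natCast_pos 1 hx
  have hψ : psi 0 x = besselI 1 x / besselI 0 x := by norm_num [psi]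
  have hq : 1 - 2 / x * psi 0 x = besselI 2 x / besselI 0 x := by
    have := besselI_sub_besselI_add_two 0 hx.ne'
    norm_num at this
    rw [hψ]
    field_simp at this ⊢
    linarith
  have hturan : besselI 0 x * besselI 2 x < besselI 1 x ^ 2 := by
    simpa using besselI_mul_besselI_add_two_lt_sq 0 hx.ne'
  have hfour := besselI_one_pow_four_lt hx.ne'
  rw [hq, hψ]
  refine log_div_log_mem_Ioo (div_pos hI1 hI0) (by norm_num) ?_ ?_ <;>
    rw [Real.rpow_ofNat, div_pow, div_lt_div_iff₀ (by positivity) (by positivity)]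
  · linarith [mul_lt_mul_of_pos_right hfour hI0]
  · linarith [mul_lt_mul_of_pos_right hturan hI0]
end

section
/- For all ν ≥ 0 and all x > 0 one has Ψ_ν²(x) + (1/x)·Ψ_ν(x) − 1 < 0, where Ψ_ν(x) = I_{ν+1}(x)/I_ν(x). -/
open Real Filter Topology

/-!
With `y = (x/2)^2` and `F_a(y) = ∑ y^m / (m! Γ(m+a+1))` one has `I_ν(x) = (x/2)^ν F_ν(y)`, so
`Ψ_ν(x) = (x/2) F_{ν+1}(y) / F_ν(y)` and the claim is equivalent to
`2 y F_{ν+1}(y)^2 < 2 F_ν(y)^2 - F_ν(y) F_{ν+1}(y)`.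
Both sides are power series in `y`. The Cauchy product coefficients `c_{a,b}(k)` of `F_a F_b`
have the closed form `Γ(a+b+2k+1) / (k! Γ(a+k+1) Γ(b+k+1) Γ(a+b+k+1))`, by induction on `k`
from the Pascal-type recursion `(k+1) c_{a,b}(k+1) = c_{a+1,b}(k) + c_{a,b+1}(k)`. Comparing the
coefficients of `y^(k+1)`, their difference is a positive multiple of `4ν^2 + 4νk + 8ν + 1 > 0`,
and the constant term of the right-hand side is positive as well.
-/

open Finset
open scoped Nat

noncomputable def besselCoeff (a : ℝ) (m : ℕ) : ℝ := (m ! * Gamma (m + a + 1))⁻¹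

lemma besselCoeff_pos {a : ℝ} (ha : -1 < a) (m : ℕ) : 0 < besselCoeff a m := by
  have := Gamma_pos_of_pos (by linarith [m.cast_nonneg (α := ℝ)] : (0 : ℝ) < m + a + 1)
  unfold besselCoeff
  positivity

lemma succ_mul_besselCoeff_succ (a : ℝ) (m : ℕ) :
    (m + 1) * besselCoeff a (m + 1) = besselCoeff (a + 1) m := by
  simp only [besselCoeff, Nat.factorial_succ, Nat.cast_mul, Nat.cast_succ]
  rw [show (m + 1 : ℝ) + a + 1 = m + (a + 1) + 1 by ring]
  field_simp

lemma Gamma_add_one_le_Gamma_nat_add {a : ℝ} (ha : 0 ≤ a) (m : ℕ) :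
    Gamma (a + 1) ≤ Gamma (m + a + 1) := by
  induction m with
  | zero => simp
  | succ n ih =>
    have hpos : 0 < Gamma (n + a + 1) := Gamma_pos_of_pos (by positivity)
    rw [Nat.cast_succ, show (n + 1 : ℝ) + a + 1 = (n + a + 1) + 1 by ring,
      Gamma_add_one (s := n + a + 1) (by positivity)]
    exact ih.trans (le_mul_of_one_le_left hpos.le (by linarith [n.cast_nonneg (α := ℝ)]))

lemma summable_norm_pow_mul_besselCoeff {a : ℝ} (ha : 0 ≤ a) (y : ℝ) :
    Summable fun m : ℕ => ‖y ^ m * besselCoeff a m‖ := by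
  have hΓ : 0 < Gamma (a + 1) := Gamma_pos_of_pos (by positivity)
  refine .of_nonneg_of_le (fun _ => norm_nonneg _) (fun m => ?_)
    ((Real.summable_pow_div_factorial |y|).mul_left (Gamma (a + 1))⁻¹)
  calc ‖y ^ m * besselCoeff a m‖ = |y| ^ m * (m ! * Gamma (m + a + 1))⁻¹ := by
        rw [norm_mul, norm_pow, Real.norm_eq_abs,
          Real.norm_of_nonneg (besselCoeff_pos (by linarith) m).le, besselCoeff]
    _ ≤ |y| ^ m * (m ! * Gamma (a + 1))⁻¹ := by
        gcongr
        exact Gamma_add_one_le_Gamma_nat_add ha m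
    _ = (Gamma (a + 1))⁻¹ * (|y| ^ m / m !) := by ring

noncomputable def besselSeries (a y : ℝ) : ℝ := ∑' m : ℕ, y ^ m * besselCoeff a m

lemma besselSeries_pos {a : ℝ} (ha : 0 ≤ a) {y : ℝ} (hy : 0 ≤ y) : 0 < besselSeries a y :=
  (summable_norm_pow_mul_besselCoeff ha y).of_norm.tsum_pos
    (fun m => mul_nonneg (pow_nonneg hy m) (besselCoeff_pos (by linarith) m).le) 0
    (by simpa using besselCoeff_pos (by linarith) 0)

lemma besselI_eq_rpow_mul_besselSeries (ν : ℝ) {x : ℝ} (hx : 0 < x) :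
    besselI ν x = (x / 2) ^ ν * besselSeries ν ((x / 2) ^ 2) := by
  rw [besselSeries, ← tsum_mul_left, besselI]
  congr 1 with m
  rw [Real.rpow_add (by positivity), show 2 * (m : ℝ) = (2 * m : ℕ) by push_cast; ring,
    Real.rpow_natCast, pow_mul, besselCoeff]
  ring

noncomputable def besselConv (a b : ℝ) (k : ℕ) : ℝ :=
  ∑ p ∈ antidiagonal k, besselCoeff a p.1 * besselCoeff b p.2

lemma besselConv_pos {a b : ℝ} (ha : -1 < a) (hb : -1 < b) (k : ℕ) : 0 < besselConv a b k :=
  sum_pos (fun p _ => mul_pos (besselCoeff_pos ha _) (besselCoeff_pos hb _)) ⟨(0, k), by simp⟩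

lemma hasSum_pow_mul_besselConv {a b : ℝ} (ha : 0 ≤ a) (hb : 0 ≤ b) (y : ℝ) :
    HasSum (fun k => y ^ k * besselConv a b k) (besselSeries a y * besselSeries b y) := by
  have hf := summable_norm_pow_mul_besselCoeff ha y
  have hg := summable_norm_pow_mul_besselCoeff hb y
  have h := (summable_norm_sum_mul_antidiagonal_of_summable_norm hf hg).of_norm.hasSum
  rw [← tsum_mul_tsum_eq_tsum_sum_antidiagonal_of_summable_norm hf hg] at h
  have hterm (k : ℕ) : y ^ k * besselConv a b k =
      ∑ p ∈ antidiagonal k, y ^ p.1 * besselCoeff a p.1 * (y ^ p.2 * besselCoeff b p.2) := by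
    rw [besselConv, mul_sum]
    refine sum_congr rfl fun p hp => ?_
    rw [← mem_antidiagonal.mp hp, pow_add]
    ring
  simp only [hterm]
  exact h

lemma succ_mul_besselConv_succ (a b : ℝ) (k : ℕ) :
    (k + 1) * besselConv a b (k + 1) = besselConv (a + 1) b k + besselConv a (b + 1) k := by
  have hsplit : (k + 1) * besselConv a b (k + 1) =
      ∑ p ∈ antidiagonal (k + 1), (p.1 * besselCoeff a p.1) * besselCoeff b p.2 +
      ∑ p ∈ antidiagonal (k + 1), besselCoeff a p.1 * (p.2 * besselCoeff b p.2) := by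
    rw [besselConv, mul_sum, ← sum_add_distrib]
    refine sum_congr rfl fun p hp => ?_
    have : (p.1 : ℝ) + p.2 = k + 1 := by exact_mod_cast mem_antidiagonal.mp hp
    rw [← this]
    ring
  rw [hsplit, Nat.sum_antidiagonal_succ, Nat.sum_antidiagonal_succ']
  simp [besselConv, succ_mul_besselCoeff_succ]

lemma Gamma_eq_mul_Gamma_of_eq_add_one {s t : ℝ} (h : t = s + 1) (hs : 0 < s) :
    Gamma t = s * Gamma s := by
  rw [h, Gamma_add_one hs.ne']

lemma besselConv_eq_Gamma {a b : ℝ} (ha : 0 ≤ a) (hb : 0 ≤ b) (k : ℕ) :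
    besselConv a b k = Gamma (a + b + 2 * k + 1) /
      (k ! * Gamma (a + k + 1) * Gamma (b + k + 1) * Gamma (a + b + k + 1)) := by
  induction k generalizing a b with
  | zero =>
    have : Gamma (a + b + 1) ≠ 0 := (Gamma_pos_of_pos (by positivity)).ne'
    simp [besselConv, besselCoeff, field]
  | succ k ih =>
    have hpas := succ_mul_besselConv_succ a b k
    rw [ih (by linarith) hb, ih ha (by linarith)] at hpas
    have gA : Gamma (a + 1 + k + 1) = (a + k + 1) * Gamma (a + k + 1) :=
      Gamma_eq_mul_Gamma_of_eq_add_one (by ring) (by positivity)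
    have gA' : Gamma (a + (k + 1 : ℕ) + 1) = (a + k + 1) * Gamma (a + k + 1) :=
      Gamma_eq_mul_Gamma_of_eq_add_one (by push_cast; ring) (by positivity)
    have gB : Gamma (b + 1 + k + 1) = (b + k + 1) * Gamma (b + k + 1) :=
      Gamma_eq_mul_Gamma_of_eq_add_one (by ring) (by positivity)
    have gB' : Gamma (b + (k + 1 : ℕ) + 1) = (b + k + 1) * Gamma (b + k + 1) :=
      Gamma_eq_mul_Gamma_of_eq_add_one (by push_cast; ring) (by positivity)
    have gC : Gamma (a + 1 + b + k + 1) = (a + b + k + 1) * Gamma (a + b + k + 1) :=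
      Gamma_eq_mul_Gamma_of_eq_add_one (by ring) (by positivity)
    have gC' : Gamma (a + (b + 1) + k + 1) = (a + b + k + 1) * Gamma (a + b + k + 1) :=
      Gamma_eq_mul_Gamma_of_eq_add_one (by ring) (by positivity)
    have gC'' : Gamma (a + b + (k + 1 : ℕ) + 1) = (a + b + k + 1) * Gamma (a + b + k + 1) :=
      Gamma_eq_mul_Gamma_of_eq_add_one (by push_cast; ring) (by positivity)
    have gD : Gamma (a + b + 2 * (k + 1 : ℕ) + 1) =
        (a + b + 2 * k + 2) * Gamma (a + b + 2 * k + 2) :=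
      Gamma_eq_mul_Gamma_of_eq_add_one (by push_cast; ring) (by positivity)
    rw [show a + 1 + b + 2 * k + 1 = a + b + 2 * k + 2 by ring,
      show a + (b + 1) + 2 * k + 1 = a + b + 2 * k + 2 by ring, gA, gB, gC, gC'] at hpas
    have := Gamma_pos_of_pos (by positivity : 0 < a + k + 1)
    have := Gamma_pos_of_pos (by positivity : 0 < b + k + 1)
    have := Gamma_pos_of_pos (by positivity : 0 < a + b + k + 1)
    rw [gA', gB', gC'', gD, Nat.factorial_succ, Nat.cast_mul]
    push_cast
    field_simp at hpas ⊢
    linear_combination hpas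

lemma besselConv_succ_right {a b : ℝ} (ha : 0 ≤ a) (hb : 0 ≤ b) (k : ℕ) :
    (b + k + 1) * (a + b + k + 1) * besselConv a (b + 1) k =
      (a + b + 2 * k + 1) * besselConv a b k := by
  have gD : Gamma (a + (b + 1) + 2 * k + 1) = (a + b + 2 * k + 1) * Gamma (a + b + 2 * k + 1) :=
    Gamma_eq_mul_Gamma_of_eq_add_one (by ring) (by positivity)
  have gB : Gamma (b + 1 + k + 1) = (b + k + 1) * Gamma (b + k + 1) :=
    Gamma_eq_mul_Gamma_of_eq_add_one (by ring) (by positivity)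
  have gC : Gamma (a + (b + 1) + k + 1) = (a + b + k + 1) * Gamma (a + b + k + 1) :=
    Gamma_eq_mul_Gamma_of_eq_add_one (by ring) (by positivity)
  rw [besselConv_eq_Gamma ha (by linarith), besselConv_eq_Gamma ha hb, gD, gB, gC]
  have := Gamma_pos_of_pos (by positivity : 0 < b + k + 1)
  field_simp

lemma besselConv_succ_succ {a b : ℝ} (ha : 0 ≤ a) (hb : 0 ≤ b) (k : ℕ) :
    (a + b + k + 2) * besselConv (a + 1) (b + 1) k = (k + 1) * besselConv a b (k + 1) := by
  have gC : Gamma (a + 1 + (b + 1) + k + 1) = (a + b + k + 2) * Gamma (a + b + k + 2) :=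
    Gamma_eq_mul_Gamma_of_eq_add_one (by ring) (by positivity)
  rw [besselConv_eq_Gamma (by linarith) (by linarith), besselConv_eq_Gamma ha hb, gC,
    Nat.factorial_succ]
  push_cast
  field_simp
  ring_nf

lemma two_mul_besselConv_succ_succ_le {ν : ℝ} (hν : 0 ≤ ν) (k : ℕ) :
    2 * besselConv (ν + 1) (ν + 1) k ≤
      2 * besselConv ν ν (k + 1) - besselConv ν (ν + 1) (k + 1) := by
  have hR1 := besselConv_succ_right hν hν (k + 1)
  have hR2 := besselConv_succ_succ hν hν k
  have hC := besselConv_pos (by linarith) (by linarith) (k + 1) (a := ν) (b := ν)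
  push_cast at hR1
  have hdiff : (ν + k + 2) * (2 * ν + k + 2) * (2 * besselConv ν ν (k + 1) -
      besselConv ν (ν + 1) (k + 1) - 2 * besselConv (ν + 1) (ν + 1) k) =
      (4 * ν ^ 2 + 4 * ν * k + 8 * ν + 1) * besselConv ν ν (k + 1) := by
    linear_combination -hR1 - 2 * (ν + k + 2) * hR2
  have hP : 0 < (ν + k + 2) * (2 * ν + k + 2) := by positivity
  rw [← sub_nonneg, ← mul_nonneg_iff_of_pos_left hP, hdiff]
  positivity

lemma two_mul_mul_sq_besselSeries_succ_lt {ν : ℝ} (hν : 0 ≤ ν) {y : ℝ} (hy : 0 ≤ y) :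
    2 * y * besselSeries (ν + 1) y ^ 2 <
      2 * besselSeries ν y ^ 2 - besselSeries ν y * besselSeries (ν + 1) y := by
  have hν1 : 0 ≤ ν + 1 := by linarith
  have hu := ((hasSum_pow_mul_besselConv hν hν y).mul_left 2).sub
    (hasSum_pow_mul_besselConv hν hν1 y)
  have hv := (hasSum_pow_mul_besselConv hν1 hν1 y).mul_left (2 * y)
  have hterm (k : ℕ) : 2 * y * (y ^ k * besselConv (ν + 1) (ν + 1) k) ≤
      2 * (y ^ (k + 1) * besselConv ν ν (k + 1)) -
        y ^ (k + 1) * besselConv ν (ν + 1) (k + 1) := by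
    have := mul_le_mul_of_nonneg_left (two_mul_besselConv_succ_succ_le hν k)
      (pow_nonneg hy (k + 1))
    rw [pow_succ] at this ⊢
    linarith
  have hle := hasSum_le hterm hv ((hasSum_nat_add_iff' 1).mpr hu)
  have hu0 : besselConv ν (ν + 1) 0 < 2 * besselConv ν ν 0 := by
    have hR1 := besselConv_succ_right hν hν 0
    have hC := besselConv_pos (by linarith) (by linarith) 0 (a := ν) (b := ν)
    have hC' := besselConv_pos (by linarith) (by linarith) 0 (a := ν) (b := ν + 1)
    norm_num at hR1
    have : (ν + 1) * besselConv ν (ν + 1) 0 = besselConv ν ν 0 :=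
      mul_left_cancel₀ (by positivity : 2 * ν + 1 ≠ 0) (by linarith)
    linarith [mul_nonneg hν hC'.le]
  simp only [range_one, sum_singleton, pow_zero, one_mul] at hle
  linarith

lemma psi_eq_besselSeries (ν : ℝ) {x : ℝ} (hx : 0 < x) :
    psi ν x = x / 2 * besselSeries (ν + 1) ((x / 2) ^ 2) / besselSeries ν ((x / 2) ^ 2) := by
  have ht : 0 < x / 2 := by positivity
  rw [psi, besselI_eq_rpow_mul_besselSeries _ hx, besselI_eq_rpow_mul_besselSeries _ hx,
    Real.rpow_add_one ht.ne', mul_comm ((x / 2) ^ ν), mul_assoc, mul_left_comm,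
    mul_div_mul_left _ _ (Real.rpow_pos_of_pos ht ν).ne']

theorem stmt_11 (ν x : ℝ) (hν : 0 ≤ ν) (hx : 0 < x) :
    (psi ν x) ^ 2 + (1 / x) * psi ν x - 1 < 0 := by
  have hy : 0 ≤ (x / 2) ^ 2 := sq_nonneg _
  have hF := besselSeries_pos hν hy
  have key := two_mul_mul_sq_besselSeries_succ_lt hν hy
  set F := besselSeries ν ((x / 2) ^ 2)
  set G := besselSeries (ν + 1) ((x / 2) ^ 2)
  have hexpr : (x / 2 * G / F) ^ 2 + 1 / x * (x / 2 * G / F) - 1 =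
      (2 * (x / 2) ^ 2 * G ^ 2 - (2 * F ^ 2 - F * G)) / (2 * F ^ 2) := by
    field_simp
    ring
  rw [psi_eq_besselSeries ν hx, hexpr]
  exact div_neg_of_neg_of_pos (by linarith) (by positivity)
end
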